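/- Let H be a Hopf algebra over a field k with multiplication m : H ⊗ H → H, comultiplication Δ and counit ε, and let Φ := (m ⊗ id) ∘ (id ⊗ Δ) : H ⊗ H → H ⊗ H. Then (id ⊗ ε) ∘ Φ = ι ∘ m, where ι : H → H ⊗ k ≅ H is the canonical identification; consequently Φ restricts to a k-linear isomorphism from ker(m) onto H ⊗ ker(ε). In particular the universal bimodule of one-forms ker(m) is, as a vector space, isomorphic to H ⊗ ker(ε). -/

import Mathlib

/- Over a field, the Galois map identifies the universal bimodule of one-forms
ker(m) with H ⊗ ker(ε). -/

open TensorProduct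

set_option synthInstance.maxHeartbeats 400000
set_option maxHeartbeats 1000000

/-- The Galois map `Φ = (m ⊗ id) ∘ (id ⊗ Δ) : H ⊗ H → H ⊗ H`,
`Φ(a ⊗ b) = a b₍₁₎ ⊗ b₍₂₎`. -/
noncomputable def galoisMap (k H : Type*) [Field k] [Ring H]
    [HopfAlgebra k H] : H ⊗[k] H →ₗ[k] H ⊗[k] H :=
  (TensorProduct.map (LinearMap.mul' k H) LinearMap.id) ∘ₗ
    (TensorProduct.assoc k H H H).symm.toLinearMap ∘ₗ
      (TensorProduct.map LinearMap.id Coalgebra.comul)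

open Coalgebra HopfAlgebra

/-- The inverse Galois map `Ψ(a ⊗ b) = a S(b₍₁₎) ⊗ b₍₂₎`. -/
noncomputable def psiMap (k H : Type*) [Field k] [Ring H]
    [HopfAlgebra k H] : H ⊗[k] H →ₗ[k] H ⊗[k] H :=
  (TensorProduct.map (LinearMap.mul' k H) LinearMap.id) ∘ₗ
    (TensorProduct.assoc k H H H).symm.toLinearMap ∘ₗ
      (TensorProduct.map LinearMap.id
        ((HopfAlgebra.antipode (R := k)).rTensor H ∘ₗ Coalgebra.comul))

section

variable (k H : Type*) [Field k] [Ring H] [HopfAlgebra k H]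

lemma galoisMap_tmul (a b : H) {ι : Type*} (r : Coalgebra.Repr k b ι) :
    galoisMap k H (a ⊗ₜ[k] b) = ∑ i ∈ r.index, (a * r.left i) ⊗ₜ[k] r.right i := by
  simp only [galoisMap, LinearMap.coe_comp, Function.comp_apply, LinearEquiv.coe_coe,
    TensorProduct.map_tmul, LinearMap.id_coe, id_eq, ← r.eq, tmul_sum, map_sum,
    assoc_symm_tmul, LinearMap.mul'_apply]

lemma psiMap_tmul (a b : H) {ι : Type*} (r : Coalgebra.Repr k b ι) :
    psiMap k H (a ⊗ₜ[k] b) =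
      ∑ i ∈ r.index, (a * HopfAlgebra.antipode (R := k) (r.left i)) ⊗ₜ[k] r.right i := by
  simp only [psiMap, LinearMap.coe_comp, Function.comp_apply, LinearEquiv.coe_coe,
    TensorProduct.map_tmul, LinearMap.id_coe, id_eq, ← r.eq, map_sum, tmul_sum,
    LinearMap.rTensor_tmul, assoc_symm_tmul, LinearMap.mul'_apply]

lemma sum_counit_smul (b : H) {ι : Type*} (r : Coalgebra.Repr k b ι) :
    ∑ i ∈ r.index, Coalgebra.counit (R := k) (r.left i) • r.right i = b := by
  have := congrArg (TensorProduct.lid k H) (Coalgebra.sum_counit_tmul_eq r)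
  simp only [map_sum, lid_tmul, one_smul] at this
  exact this

lemma sum_smul_counit (b : H) {ι : Type*} (r : Coalgebra.Repr k b ι) :
    ∑ i ∈ r.index, Coalgebra.counit (R := k) (r.right i) • r.left i = b := by
  have := congrArg (TensorProduct.rid k H) (Coalgebra.sum_tmul_counit_eq r)
  simp only [map_sum, rid_tmul, one_smul] at this
  exact this

/-- auxiliary trilinear map `x ⊗ (y ⊗ z) ↦ f(x ⊗ y) ⊗ z`. -/
noncomputable def auxT (f : H ⊗[k] H →ₗ[k] H) : H ⊗[k] (H ⊗[k] H) →ₗ[k] H ⊗[k] H :=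
  (TensorProduct.map f LinearMap.id) ∘ₗ (TensorProduct.assoc k H H H).symm.toLinearMap

lemma auxT_tmul (f : H ⊗[k] H →ₗ[k] H) (x y z : H) :
    auxT k H f (x ⊗ₜ[k] (y ⊗ₜ[k] z)) = f (x ⊗ₜ[k] y) ⊗ₜ[k] z := by
  simp [auxT]

lemma galois_psi : (galoisMap k H) ∘ₗ (psiMap k H) = LinearMap.id := by
  apply TensorProduct.ext'
  intro a b
  set r := ℛ k b with hr
  rw [LinearMap.comp_apply, psiMap_tmul k H a b r, map_sum, LinearMap.id_apply]
  have key := congrArg (auxT k H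
    ((LinearMap.mulLeft k a) ∘ₗ (LinearMap.mul' k H) ∘ₗ
      (HopfAlgebra.antipode (R := k)).rTensor H))
    (Coalgebra.sum_tmul_tmul_eq r (fun i => ℛ k (r.left i)) (fun i => ℛ k (r.right i)))
  simp only [map_sum, auxT_tmul, LinearMap.comp_apply, LinearMap.rTensor_tmul,
    LinearMap.mul'_apply, LinearMap.mulLeft_apply] at key
  calc ∑ i ∈ r.index, galoisMap k H ((a * antipode (R := k) (r.left i)) ⊗ₜ[k] r.right i)
      = ∑ i ∈ r.index, ∑ j ∈ (ℛ k (r.right i)).index,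
          (a * antipode (R := k) (r.left i) * (ℛ k (r.right i)).left j) ⊗ₜ[k]
            (ℛ k (r.right i)).right j := by
        refine Finset.sum_congr rfl fun i _ => ?_
        rw [galoisMap_tmul k H _ _ (ℛ k (r.right i))]
    _ = ∑ i ∈ r.index, ∑ j ∈ (ℛ k (r.left i)).index,
          (a * (antipode (R := k) ((ℛ k (r.left i)).left j) * (ℛ k (r.left i)).right j)) ⊗ₜ[k]
            r.right i := by
        simp only [mul_assoc]; exact key.symm
    _ = ∑ i ∈ r.index, (a * (counit (R := k) (r.left i) • (1 : H))) ⊗ₜ[k] r.right i := by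
        refine Finset.sum_congr rfl fun i _ => ?_
        rw [← TensorProduct.sum_tmul, ← Finset.mul_sum, HopfAlgebra.sum_antipode_mul_eq_smul]
    _ = a ⊗ₜ[k] b := by
        simp only [mul_smul_comm, mul_one, smul_tmul, ← tmul_sum]
        rw [sum_counit_smul k H b r]

lemma psi_galois : (psiMap k H) ∘ₗ (galoisMap k H) = LinearMap.id := by
  apply TensorProduct.ext'
  intro a b
  set r := ℛ k b with hr
  rw [LinearMap.comp_apply, galoisMap_tmul k H a b r, map_sum, LinearMap.id_apply]
  have key := congrArg (auxT k H
    ((LinearMap.mulLeft k a) ∘ₗ (LinearMap.mul' k H) ∘ₗ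
      (HopfAlgebra.antipode (R := k)).lTensor H))
    (Coalgebra.sum_tmul_tmul_eq r (fun i => ℛ k (r.left i)) (fun i => ℛ k (r.right i)))
  simp only [map_sum, auxT_tmul, LinearMap.comp_apply, LinearMap.lTensor_tmul,
    LinearMap.mul'_apply, LinearMap.mulLeft_apply] at key
  calc ∑ i ∈ r.index, psiMap k H ((a * r.left i) ⊗ₜ[k] r.right i)
      = ∑ i ∈ r.index, ∑ j ∈ (ℛ k (r.right i)).index,
          (a * r.left i * antipode (R := k) ((ℛ k (r.right i)).left j)) ⊗ₜ[k]
            (ℛ k (r.right i)).right j := by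
        refine Finset.sum_congr rfl fun i _ => ?_
        rw [psiMap_tmul k H _ _ (ℛ k (r.right i))]
    _ = ∑ i ∈ r.index, ∑ j ∈ (ℛ k (r.left i)).index,
          (a * ((ℛ k (r.left i)).left j * antipode (R := k) ((ℛ k (r.left i)).right j))) ⊗ₜ[k]
            r.right i := by
        simp only [mul_assoc]; exact key.symm
    _ = ∑ i ∈ r.index, (a * (counit (R := k) (r.left i) • (1 : H))) ⊗ₜ[k] r.right i := by
        refine Finset.sum_congr rfl fun i _ => ?_
        rw [← TensorProduct.sum_tmul, ← Finset.mul_sum, HopfAlgebra.sum_mul_antipode_eq_smul]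
    _ = a ⊗ₜ[k] b := by
        simp only [mul_smul_comm, mul_one, smul_tmul, ← tmul_sum]
        rw [sum_counit_smul k H b r]

/-- The Galois map as a linear equivalence. -/
noncomputable def galoisEquiv : H ⊗[k] H ≃ₗ[k] H ⊗[k] H :=
  LinearEquiv.ofLinear (galoisMap k H) (psiMap k H) (galois_psi k H) (psi_galois k H)

lemma part1 :
    (TensorProduct.rid k H).toLinearMap ∘ₗ
        (TensorProduct.map LinearMap.id (Coalgebra.counit : H →ₗ[k] k)) ∘ₗ
          galoisMap k H =
      LinearMap.mul' k H := by
  apply TensorProduct.ext'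
  intro a b
  set r := ℛ k b with hr
  rw [LinearMap.comp_apply, LinearMap.comp_apply, galoisMap_tmul k H a b r]
  simp only [map_sum, TensorProduct.map_tmul, LinearMap.id_coe, id_eq, LinearEquiv.coe_coe,
    rid_tmul, LinearMap.mul'_apply]
  simp only [← mul_smul_comm, ← Finset.mul_sum]
  rw [sum_smul_counit k H b r]

end

theorem galoisMap_ker_mul (k H : Type*) [Field k] [Ring H] [HopfAlgebra k H] :
    (TensorProduct.rid k H).toLinearMap ∘ₗ
        (TensorProduct.map LinearMap.id (Coalgebra.counit : H →ₗ[k] k)) ∘ₗ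
          galoisMap k H =
      LinearMap.mul' k H ∧
    Submodule.map (galoisMap k H) (LinearMap.ker (LinearMap.mul' k H)) =
      LinearMap.range (TensorProduct.map (LinearMap.id : H →ₗ[k] H)
        (LinearMap.ker (Coalgebra.counit : H →ₗ[k] k)).subtype) ∧
    Nonempty ((LinearMap.ker (LinearMap.mul' k H)) ≃ₗ[k]
      H ⊗[k] (LinearMap.ker (Coalgebra.counit : H →ₗ[k] k))) := by
  classical
  have hsurj : Function.Surjective (galoisMap k H) := fun y =>
    ⟨psiMap k H y, LinearMap.congr_fun (galois_psi k H) y⟩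
  have hinj : Function.Injective
      (TensorProduct.map (LinearMap.id : H →ₗ[k] H)
        (LinearMap.ker (Coalgebra.counit : H →ₗ[k] k)).subtype) :=
    Module.Flat.lTensor_preserves_injective_linearMap _ (Submodule.injective_subtype _)
  have hexact : Function.Exact
      ((LinearMap.ker (Coalgebra.counit : H →ₗ[k] k)).subtype)
      (Coalgebra.counit : H →ₗ[k] k) :=
    LinearMap.exact_subtype_ker_map _
  have hrange : LinearMap.range
        (((LinearMap.ker (Coalgebra.counit : H →ₗ[k] k)).subtype).lTensor H) =
      LinearMap.ker ((Coalgebra.counit : H →ₗ[k] k).lTensor H) :=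
    (LinearMap.exact_iff.mp (Module.Flat.lTensor_exact H hexact)).symm
  have hker : LinearMap.ker (LinearMap.mul' k H) =
      Submodule.comap (galoisMap k H)
        (LinearMap.ker ((Coalgebra.counit : H →ₗ[k] k).lTensor H)) := by
    conv_lhs => rw [← part1 k H]
    rw [LinearMap.ker_comp, LinearEquiv.ker, Submodule.comap_bot, LinearMap.ker_comp]
    rfl
  have h2 : Submodule.map (galoisMap k H) (LinearMap.ker (LinearMap.mul' k H)) =
      LinearMap.range (TensorProduct.map (LinearMap.id : H →ₗ[k] H)
        (LinearMap.ker (Coalgebra.counit : H →ₗ[k] k)).subtype) := by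
    rw [hker, Submodule.map_comap_eq_of_surjective hsurj, ← hrange]
    rfl
  refine ⟨part1 k H, h2, ⟨?_⟩⟩
  have hmapeq : Submodule.map ((galoisEquiv k H : H ⊗[k] H →ₗ[k] H ⊗[k] H))
      (LinearMap.ker (LinearMap.mul' k H)) =
      LinearMap.range (TensorProduct.map (LinearMap.id : H →ₗ[k] H)
        (LinearMap.ker (Coalgebra.counit : H →ₗ[k] k)).subtype) := h2
  exact ((galoisEquiv k H).submoduleMap (LinearMap.ker (LinearMap.mul' k H))).trans
    ((LinearEquiv.ofEq _ _ hmapeq).trans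
      (LinearEquiv.ofInjective _ hinj).symm)
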